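/- Let O be a finitely generated residually nilpotent semigroup (or associative algebra). Then O has finite coclass if and only if there exists i ∈ ℕ such that |O^j \ O^{j+1}| = 1 (respectively dim(O^j/O^{j+1}) = 1) for all j ≥ i. -/

import Mathlib

/-- `sgPow S i` is the set `Sⁱ` of all products of `i` elements of `S`
(with the convention `S⁰ = S¹ = S`). -/
def sgPow (S : Type*) [Mul S] : ℕ → Set S
  | 0 => Set.univ
  | 1 => Set.univ
  | n + 2 => Set.image2 (· * ·) (sgPow S (n + 1)) Set.univ

/-- A semigroup with zero is nilpotent of class `c` if `S^(c+1) = {0}` and `S^c ≠ {0}`. -/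
def IsNilpotentOfClass (S : Type*) [SemigroupWithZero S] (c : ℕ) : Prop :=
  sgPow S (c + 1) = {0} ∧ sgPow S c ≠ {0}

/-- `mpow x i` is the power `xⁱ` in a magma, for `i ≥ 1` (with `mpow x 0 = x` by convention). -/
def mpow {S : Type*} [Mul S] (x : S) : ℕ → S
  | 0 => x
  | 1 => x
  | n + 2 => mpow x (n + 1) * x
/-- A semigroup is finitely generated if it is generated by a finite set. -/
def FGSemigroup (S : Type*) [Mul S] : Prop :=
  ∃ F : Finset S, Subsemigroup.closure (F : Set S) = ⊤

/-- A semigroup with zero is residually nilpotent if the intersection of its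
power ideals is `{0}`. -/
def ResiduallyNilpotent (S : Type*) [SemigroupWithZero S] : Prop :=
  ⋂ i, sgPow S (i + 1) = {0}

/-- The coclass of the nilpotent quotient `S/Sⁱ`: its number of non-zero elements,
`|S \ Sⁱ|`, minus its class `i - 1`. -/
noncomputable def ccQuot (S : Type*) [SemigroupWithZero S] (i : ℕ) : ℕ :=
  (Set.univ \ sgPow S i).ncard - (i - 1)

/-- A finitely generated residually nilpotent semigroup has coclass `r` if the coclasses
of its nilpotent quotients `S/Sⁱ` converge to `r`. -/
def HasCoclassSg (S : Type*) [SemigroupWithZero S] (r : ℕ) : Prop :=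
  ∀ᶠ i in Filter.atTop, ccQuot S i = r
section AlgebraDefs

variable (K : Type*) [Field K] (A : Type*) [NonUnitalRing A] [Module K A]
  [SMulCommClass K A A] [IsScalarTower K A A]

/-- `algPow K A i` is the submodule `Aⁱ` spanned by all products of `i` elements
(with `A⁰ = A¹ = A`). -/
def algPow : ℕ → Submodule K A
  | 0 => ⊤
  | 1 => ⊤
  | n + 2 => Submodule.span K (Set.image2 (· * ·) ((algPow (n + 1) : Submodule K A) : Set A) Set.univ)

/-- The dimension of the layer `Aⁱ/Aⁱ⁺¹`. -/
noncomputable def algLayerDim (i : ℕ) : ℕ :=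
  Module.finrank K
    (↥(algPow K A i) ⧸ (algPow K A (i + 1)).comap (algPow K A i).subtype)

/-- The coclass of the nilpotent quotient `A/Aⁱ`, namely `dim (A/Aⁱ) - (i - 1)`. -/
noncomputable def algCcQuot (i : ℕ) : ℕ :=
  Module.finrank K (A ⧸ algPow K A i) - (i - 1)

/-- A finitely generated residually nilpotent algebra has coclass `r` if the coclasses
of its nilpotent quotients `A/Aⁱ` converge to `r`. -/
def HasCoclassAlg (r : ℕ) : Prop :=
  ∀ᶠ i in Filter.atTop, algCcQuot K A i = r

/-- The two-sided annihilator of an algebra, as a submodule. -/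
def twoSidedAnn : Submodule K A where
  carrier := {a | (∀ b, a * b = 0) ∧ ∀ b, b * a = 0}
  add_mem' := by
    intro a b ha hb
    exact ⟨fun c => by rw [add_mul, ha.1 c, hb.1 c, add_zero],
           fun c => by rw [mul_add, ha.2 c, hb.2 c, add_zero]⟩
  zero_mem' := ⟨fun b => zero_mul b, fun b => mul_zero b⟩
  smul_mem' := by
    intro k a ha
    exact ⟨fun b => by rw [smul_mul_assoc, ha.1 b, smul_zero],
           fun b => by rw [mul_smul_comm, ha.2 b, smul_zero]⟩

/-- The right annihilator of an algebra, as a submodule. -/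
def rightAnn : Submodule K A where
  carrier := {a | ∀ b, b * a = 0}
  add_mem' := by
    intro a b ha hb c
    rw [mul_add, ha c, hb c, add_zero]
  zero_mem' := fun b => mul_zero b
  smul_mem' := by
    intro k a ha b
    rw [mul_smul_comm, ha b, smul_zero]

end AlgebraDefs

/-- `IsContractedAlgebra K f` asserts that `f : S → A` exhibits the algebra `A` as the
contracted semigroup algebra of the semigroup-with-zero `S` over the field `K`:
`f` is multiplicative, sends zero to zero, and the images of the non-zero elements
of `S` form a `K`-basis of `A`. -/
def IsContractedAlgebra (K : Type*) [Field K] {S A : Type*} [SemigroupWithZero S]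
    [NonUnitalRing A] [Module K A] (f : S → A) : Prop :=
  f 0 = 0 ∧ (∀ s t : S, f (s * t) = f s * f t) ∧
  LinearIndependent K (fun s : {s : S // s ≠ 0} => f s.1) ∧
  Submodule.span K (Set.range fun s : {s : S // s ≠ 0} => f s.1) = ⊤

/-! Write `d j` for the size of `O/Oʲ` (its number of non-zero elements, resp. its dimension)
and `l j` for that of the layer `Oʲ/Oʲ⁺¹`. Finite generation makes every `d j` finite, and
`d (j + 1) = d j + l j`. If `Oʲ⁺¹ = Oʲ` for some `j ≥ 1`, the powers are constant from `j` on,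
so residual nilpotency gives `Oʲ = 0` and `O` would be finite; hence `l j ≥ 1` for `j ≥ 1`.
The coclass `d j - (j - 1)` therefore changes by `l j - 1 ≥ 0` at each step, and it is
eventually constant exactly when eventually `l j = 1`. -/

open Filter

theorem exists_eventually_sub_pred_eq_iff {d l : ℕ → ℕ} (hd : ∀ j, d (j + 1) = d j + l j)
    (hl : ∀ j, 1 ≤ j → 1 ≤ l j) :
    (∃ r, ∀ᶠ j in atTop, d j - (j - 1) = r) ↔ ∃ i, ∀ j, i ≤ j → l j = 1 := by
  have hd_ge : ∀ j, j - 1 ≤ d j := by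
    intro j
    induction j with
    | zero => omega
    | succ j ih =>
      rcases Nat.eq_zero_or_pos j with rfl | hj
      · omega
      · have := hl j hj
        have := hd j
        omega
  constructor
  · rintro ⟨r, hr⟩
    obtain ⟨i, hi⟩ := eventually_atTop.mp hr
    refine ⟨max i 1, fun j hj => ?_⟩
    have := hi j (by omega)
    have := hi (j + 1) (by omega)
    have := hd_ge j
    have := hl j (by omega)
    have := hd j
    omega
  · rintro ⟨i, hi⟩
    refine ⟨d (max i 1) - (max i 1 - 1), eventually_atTop.mpr ⟨max i 1, ?_⟩⟩
    refine Nat.le_induction rfl fun j hj ih => ?_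
    have := hi j (by omega)
    have := hd j
    have := hd_ge j
    omega

theorem iInf_succ_eq_of_succ_eq {α : Type*} [CompleteLattice α] {P : ℕ → α} (f : α → α)
    (hP : Antitone P) (hf : ∀ n, 1 ≤ n → P (n + 1) = f (P n)) {j : ℕ} (hj : 1 ≤ j)
    (h : P (j + 1) = P j) : ⨅ i, P (i + 1) = P j := by
  have hstable : ∀ k, j ≤ k → P k = P j := by
    refine Nat.le_induction rfl fun k hk ih => ?_
    rw [hf k (hj.trans hk), ih, ← hf j hj, h]
  refine le_antisymm ?_ (le_iInf fun i => ?_)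
  · simpa [Nat.sub_add_cancel hj] using iInf_le (fun i => P (i + 1)) (j - 1)
  · rcases le_total (i + 1) j with hij | hji
    · exact hP hij
    · exact (hstable _ hji).ge

section ProdSet

variable {S : Type*} [Semigroup S]

/-- `prodSet F n` is the set of products of exactly `n + 1` elements of `F`. -/
def prodSet (F : Set S) : ℕ → Set S
  | 0 => F
  | n + 1 => Set.image2 (· * ·) (prodSet F n) F

theorem prodSet_finite {F : Set S} (hF : F.Finite) : ∀ n, (prodSet F n).Finite
  | 0 => hF
  | n + 1 => (prodSet_finite hF n).image2 _ hF

theorem mul_mem_prodSet {F : Set S} {a b : S} {m : ℕ} (ha : a ∈ prodSet F m) :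
    ∀ {n : ℕ}, b ∈ prodSet F n → a * b ∈ prodSet F (m + n + 1)
  | 0, hb => Set.mem_image2_of_mem ha hb
  | n + 1, hb => by
    obtain ⟨b', hb', c, hc, rfl⟩ := hb
    rw [← mul_assoc]
    exact Set.mem_image2_of_mem (mul_mem_prodSet ha hb') hc

theorem closure_subset_iUnion_prodSet (F : Set S) :
    (Subsemigroup.closure F : Set S) ⊆ ⋃ n, prodSet F n := by
  let T : Subsemigroup S :=
    { carrier := ⋃ n, prodSet F n
      mul_mem' := by
        simp only [Set.mem_iUnion]
        rintro a b ⟨m, ha⟩ ⟨n, hb⟩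
        exact ⟨m + n + 1, mul_mem_prodSet ha hb⟩ }
  exact (Subsemigroup.closure_le (S := T)).mpr fun x hx => Set.mem_iUnion.mpr ⟨0, hx⟩

theorem closure_subset_biUnion_prodSet_union {F : Set S} {T : Set S} {i : ℕ}
    (hT : ∀ n, i ≤ n + 1 → prodSet F n ⊆ T) :
    (Subsemigroup.closure F : Set S) ⊆ (⋃ n ∈ Set.Iio i, prodSet F n) ∪ T := by
  intro x hx
  obtain ⟨n, hn⟩ := Set.mem_iUnion.mp (closure_subset_iUnion_prodSet F hx)
  by_cases hni : i ≤ n + 1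
  · exact Or.inr (hT n hni hn)
  · exact Or.inl (Set.mem_biUnion (show n ∈ Set.Iio i by simp only [Set.mem_Iio]; omega) hn)

end ProdSet

section Semigroup

theorem sgPow_succ_of_one_le {S : Type*} [Mul S] {n : ℕ} (hn : 1 ≤ n) :
    sgPow S (n + 1) = Set.image2 (· * ·) (sgPow S n) Set.univ := by
  obtain ⟨m, rfl⟩ : ∃ m, n = m + 1 := ⟨n - 1, by omega⟩
  rfl

theorem sgPow_succ_subset {S : Type*} [Mul S] : ∀ n, sgPow S (n + 1) ⊆ sgPow S n
  | 0 | 1 => Set.subset_univ _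
  | n + 2 => Set.image2_subset (sgPow_succ_subset (n + 1)) subset_rfl

theorem sgPow_antitone {S : Type*} [Mul S] : Antitone (sgPow S) :=
  antitone_nat_of_succ_le sgPow_succ_subset

theorem prodSet_subset_sgPow {S : Type*} [Semigroup S] (F : Set S) :
    ∀ n, prodSet F n ⊆ sgPow S (n + 1)
  | 0 => Set.subset_univ _
  | n + 1 => Set.image2_subset (prodSet_subset_sgPow F n) (Set.subset_univ _)

theorem finite_univ_diff_sgPow {S : Type*} [Semigroup S] (hFG : FGSemigroup S) (i : ℕ) :
    (Set.univ \ sgPow S i).Finite := by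
  obtain ⟨F, hF⟩ := hFG
  have hcover := closure_subset_biUnion_prodSet_union (F := (F : Set S)) (i := i)
    fun n hn => (prodSet_subset_sgPow _ n).trans (sgPow_antitone hn)
  rw [hF, Subsemigroup.coe_top] at hcover
  refine ((Set.finite_Iio i).biUnion fun n _ => prodSet_finite F.finite_toSet n).subset ?_
  rintro x ⟨-, hx⟩
  exact (hcover trivial).resolve_right hx

theorem ncard_univ_diff_eq_add {α : Type*} {s t : Set α} (hts : t ⊆ s)
    (ht : (Set.univ \ t).Finite) :
    (Set.univ \ t).ncard = (Set.univ \ s).ncard + (s \ t).ncard := by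
  simp only [← Set.compl_eq_univ_sdiff] at ht ⊢
  rw [← Set.ncard_sdiff_add_ncard_of_subset (Set.compl_subset_compl.mpr hts) ht,
    compl_sdiff_compl, add_comm]

variable {S : Type*} [SemigroupWithZero S] [Infinite S]

theorem sgPow_diff_sgPow_succ_nonempty (hFG : FGSemigroup S) (hRN : ResiduallyNilpotent S)
    {j : ℕ} (hj : 1 ≤ j) : (sgPow S j \ sgPow S (j + 1)).Nonempty := by
  by_contra hempty
  have hsucc : sgPow S (j + 1) = sgPow S j :=
    (sgPow_succ_subset j).antisymm (Set.sdiff_eq_empty.mp (Set.not_nonempty_iff_eq_empty.mp hempty))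
  have hzero : sgPow S j = {0} :=
    (iInf_succ_eq_of_succ_eq (Set.image2 (· * ·) · Set.univ) sgPow_antitone
      (fun _ => sgPow_succ_of_one_le) hj hsucc).symm.trans hRN
  refine Set.infinite_univ (((finite_univ_diff_sgPow hFG j).insert 0).subset fun x _ => ?_)
  by_cases hx : x = 0
  · exact Or.inl hx
  · exact Or.inr ⟨trivial, by rwa [hzero]⟩

theorem exists_hasCoclassSg_iff (hFG : FGSemigroup S) (hRN : ResiduallyNilpotent S) :
    (∃ r, HasCoclassSg S r) ↔
      ∃ i, ∀ j, i ≤ j → (sgPow S j \ sgPow S (j + 1)).ncard = 1 :=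
  exists_eventually_sub_pred_eq_iff
    (fun j => ncard_univ_diff_eq_add (sgPow_succ_subset j) (finite_univ_diff_sgPow hFG (j + 1)))
    fun j hj => (sgPow_diff_sgPow_succ_nonempty hFG hRN hj).ncard_pos
      ((finite_univ_diff_sgPow hFG (j + 1)).subset fun _ hx => ⟨trivial, hx.2⟩)

end Semigroup

section Quotient

variable {R M : Type*} [Ring R] [AddCommGroup M] [Module R M]

noncomputable def quotientComapSubtypeEquivMapMkQ (P Q : Submodule R M) :
    (P ⧸ Q.comap P.subtype) ≃ₗ[R] Submodule.map Q.mkQ P :=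
  let f := Q.mkQ ∘ₗ P.subtype
  (Submodule.quotEquivOfEq _ _ (by rw [LinearMap.ker_comp, Submodule.ker_mkQ])).trans
    (f.quotKerEquivRange.trans (LinearEquiv.ofEq _ _ (by rw [LinearMap.range_comp,
      Submodule.range_subtype])))

variable {K : Type*} [Field K] [Module K M] {P Q : Submodule K M} [Module.Finite K (M ⧸ Q)]

theorem finrank_quotient_eq_add_of_le (hQP : Q ≤ P) :
    Module.finrank K (M ⧸ Q) =
      Module.finrank K (M ⧸ P) + Module.finrank K (P ⧸ Q.comap P.subtype) := by
  rw [(quotientComapSubtypeEquivMapMkQ P Q).finrank_eq,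
    ← (Submodule.quotientQuotientEquivQuotient Q P hQP).finrank_eq,
    Submodule.finrank_quotient_add_finrank]

theorem le_of_finrank_quotient_comap_subtype_eq_zero
    (h : Module.finrank K (P ⧸ Q.comap P.subtype) = 0) : P ≤ Q := by
  have := Module.Finite.equiv (quotientComapSubtypeEquivMapMkQ P Q).symm
  rw [Module.finrank_zero_iff, Submodule.Quotient.subsingleton_iff] at h
  exact Submodule.comap_subtype_eq_top.mp h

end Quotient

section Algebra

variable (K : Type*) [Field K] (A : Type*) [NonUnitalRing A] [Module K A]

theorem algPow_succ_of_one_le {n : ℕ} (hn : 1 ≤ n) :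
    algPow K A (n + 1) = Submodule.span K (Set.image2 (· * ·) (algPow K A n : Set A) Set.univ) := by
  obtain ⟨m, rfl⟩ : ∃ m, n = m + 1 := ⟨n - 1, by omega⟩
  rfl

theorem algPow_succ_le : ∀ n, algPow K A (n + 1) ≤ algPow K A n
  | 0 | 1 => le_top
  | n + 2 => Submodule.span_mono (Set.image2_subset (algPow_succ_le (n + 1)) subset_rfl)

theorem algPow_antitone : Antitone (algPow K A) :=
  antitone_nat_of_succ_le (algPow_succ_le K A)

theorem prodSet_subset_algPow (F : Set A) : ∀ n, prodSet F n ⊆ algPow K A (n + 1)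
  | 0 => fun _ _ => Submodule.mem_top
  | n + 1 => fun _ ⟨_, ha, _, _, hx⟩ =>
    hx ▸ Submodule.subset_span (Set.mem_image2_of_mem (prodSet_subset_algPow F n ha) trivial)

variable {K A} [SMulCommClass K A A] [IsScalarTower K A A]

theorem finite_quotient_algPow
    (hFG : ∃ F : Finset A, NonUnitalAlgebra.adjoin K (F : Set A) = ⊤) (i : ℕ) :
    Module.Finite K (A ⧸ algPow K A i) := by
  obtain ⟨F, hF⟩ := hFG
  set T := ⋃ n ∈ Set.Iio i, prodSet (F : Set A) n
  have hcover := closure_subset_biUnion_prodSet_union (F := (F : Set A)) (i := i)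
    fun n hn => (prodSet_subset_algPow K A _ n).trans (algPow_antitone K A hn)
  have hspan : algPow K A i ⊔ Submodule.span K T = ⊤ := by
    rw [eq_top_iff, ← NonUnitalAlgebra.top_toSubmodule (R := K), ← hF,
      NonUnitalAlgebra.adjoin_eq_span, Submodule.span_le]
    rintro x hx
    rcases hcover hx with hT | hP
    · exact Submodule.mem_sup_right (Submodule.subset_span hT)
    · exact Submodule.mem_sup_left hP
  rw [Module.finite_def, ← (Submodule.map_mkQ_eq_top _ _).mpr hspan]
  exact (Submodule.fg_span ((Set.finite_Iio i).biUnion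
    fun n _ => prodSet_finite F.finite_toSet n)).map _

theorem one_le_algLayerDim (hinf : ¬ Module.Finite K A)
    (hFG : ∃ F : Finset A, NonUnitalAlgebra.adjoin K (F : Set A) = ⊤)
    (hRN : ⨅ i, algPow K A (i + 1) = ⊥) {j : ℕ} (hj : 1 ≤ j) : 1 ≤ algLayerDim K A j := by
  by_contra h0
  have := finite_quotient_algPow hFG (j + 1)
  have hsucc : algPow K A (j + 1) = algPow K A j := (algPow_succ_le K A j).antisymm
    (le_of_finrank_quotient_comap_subtype_eq_zero (Nat.lt_one_iff.mp (not_le.mp h0)))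
  have hbot : algPow K A j = ⊥ :=
    (iInf_succ_eq_of_succ_eq (fun P => Submodule.span K (Set.image2 (· * ·) (P : Set A) Set.univ))
      (algPow_antitone K A) (fun _ => algPow_succ_of_one_le K A) hj hsucc).symm.trans hRN
  have := finite_quotient_algPow hFG j
  exact hinf (Module.Finite.equiv (Submodule.quotEquivOfEqBot _ hbot))

theorem exists_hasCoclassAlg_iff (hinf : ¬ Module.Finite K A)
    (hFG : ∃ F : Finset A, NonUnitalAlgebra.adjoin K (F : Set A) = ⊤)
    (hRN : ⨅ i, algPow K A (i + 1) = ⊥) :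
    (∃ r, HasCoclassAlg K A r) ↔ ∃ i, ∀ j, i ≤ j → algLayerDim K A j = 1 :=
  exists_eventually_sub_pred_eq_iff
    (fun j => by
      have := finite_quotient_algPow hFG (j + 1)
      exact finrank_quotient_eq_add_of_le (algPow_succ_le K A j))
    fun _ => one_le_algLayerDim hinf hFG hRN

end Algebra

/-- A finitely generated residually nilpotent infinite semigroup (respectively
infinite-dimensional associative algebra) `O` has finite coclass if and only if there is
an `i ∈ ℕ` such that `|Oʲ \ Oʲ⁺¹| = 1` (respectively `dim (Oʲ/Oʲ⁺¹) = 1`) for all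
`j ≥ i`. -/
theorem statement19 :
    (∀ (S : Type) [SemigroupWithZero S] [Infinite S],
       FGSemigroup S → ResiduallyNilpotent S →
       ((∃ r, HasCoclassSg S r) ↔
         ∃ i, ∀ j, i ≤ j → (sgPow S j \ sgPow S (j + 1)).ncard = 1)) ∧
    (∀ (K A : Type) [Field K] [NonUnitalRing A] [Module K A]
       [SMulCommClass K A A] [IsScalarTower K A A],
       ¬ Module.Finite K A →
       (∃ F : Finset A, NonUnitalAlgebra.adjoin K (F : Set A) = ⊤) →
       (⨅ i, algPow K A (i + 1) = ⊥) →
       ((∃ r, HasCoclassAlg K A r) ↔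
         ∃ i, ∀ j, i ≤ j → algLayerDim K A j = 1)) :=
  ⟨fun _ _ _ => exists_hasCoclassSg_iff, fun _ _ _ _ _ _ _ => exists_hasCoclassAlg_iff⟩
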